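/- arXiv:1804.06336 — 4 statements merged into one kernel-verified Lean document; each statement's English description precedes it below -/
import Mathlib

section
/- The set {2^i * s : i ≥ 0} ∪ {2n+1 : n ∈ ℕ}, for a fixed even s ≥ 2, is not eventually periodic (not semilinear as a subset of ℕ). -/
/-- A subset of ℕ is eventually periodic (semilinear) if there exist `N` and `p > 0`
such that for all `n ≥ N`, `n ∈ S ↔ n + p ∈ S`. -/
def EventuallyPeriodic (S : Set ℕ) : Prop :=
  ∃ N p : ℕ, 0 < p ∧ ∀ n ≥ N, (n ∈ S ↔ n + p ∈ S)

/-! Twice a period is a period, so the set has an even period `q`. Its even elements are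
the numbers `2 ^ i * s`, whose gaps grow without bound: once `2 ^ i * s` exceeds `q`, shifting
it by `q` lands on an even number strictly between `2 ^ i * s` and `2 ^ (i + 1) * s`, which is
not in the set. -/

theorem EventuallyPeriodic.exists_even_period {S : Set ℕ} (hS : EventuallyPeriodic S) :
    ∃ N q : ℕ, Even q ∧ 0 < q ∧ ∀ n ≥ N, (n ∈ S ↔ n + q ∈ S) := by
  obtain ⟨N, p, hp, hper⟩ := hS
  refine ⟨N, p + p, ⟨p, rfl⟩, by omega, fun n hn => ?_⟩
  rw [← add_assoc]
  exact (hper n hn).trans (hper (n + p) (by omega))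

theorem Nat.two_pow_succ_mul_le_of_two_pow_mul_lt {i j s : ℕ} (h : 2 ^ i * s < 2 ^ j * s) :
    2 ^ (i + 1) * s ≤ 2 ^ j * s := by
  have hij : i < j := (Nat.pow_lt_pow_iff_right (by norm_num)).mp (Nat.lt_of_mul_lt_mul_right h)
  exact Nat.mul_le_mul_right s (Nat.pow_le_pow_right (by norm_num) hij)

theorem stmt_0_general (s : ℕ) (hs2 : 2 ≤ s) :
    ¬ EventuallyPeriodic ({n | ∃ i : ℕ, n = 2 ^ i * s} ∪ {n | Odd n}) := by
  intro hS
  obtain ⟨N, q, hq_even, hq_pos, hper⟩ := hS.exists_even_period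
  obtain ⟨i, hi⟩ : ∃ i, N + q < 2 ^ i := ⟨N + q, Nat.lt_two_pow_self⟩
  have hsmall : N + q < 2 ^ i * s := hi.trans_le (Nat.le_mul_of_pos_right _ (by omega))
  have hdouble : 2 ^ (i + 1) * s = 2 * (2 ^ i * s) := by ring
  have hshift : 2 ^ (i + 1) * s + q ∈ ({n | ∃ i : ℕ, n = 2 ^ i * s} ∪ {n | Odd n}) :=
    (hper _ (by omega)).mp (Or.inl ⟨i + 1, rfl⟩)
  have hshift_even : Even (2 ^ (i + 1) * s + q) :=
    (hdouble ▸ even_two_mul _).add hq_even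
  obtain ⟨j, hj⟩ | hodd := hshift
  · have hgap : 2 ^ (i + 1 + 1) * s ≤ 2 ^ j * s :=
      Nat.two_pow_succ_mul_le_of_two_pow_mul_lt (by omega)
    have hquad : 2 ^ (i + 1 + 1) * s = 2 * (2 ^ (i + 1) * s) := by ring
    omega
  · exact Nat.not_odd_iff_even.mpr hshift_even hodd

theorem stmt_0 (s : ℕ) (hs : Even s) (hs2 : 2 ≤ s) :
    ¬ EventuallyPeriodic ({n | ∃ i : ℕ, n = 2 ^ i * s} ∪ {n | Odd n}) :=
  stmt_0_general s hs2
end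

section
/- Deadness is absorbing: if rchk < rhupd holds for a register configuration, then after applying any of the updates inc, dec, chk, cb, chkcb (as defined for the single-counter ℕ-simulation), rchk < rhupd still holds. -/
/-- Register configuration for the single-counter ℕ-simulation. -/
structure Cfg where
  rp : ℕ
  rn : ℕ
  rupd : ℕ
  rhupd : ℕ
  rchk : ℕ
  rcb : ℕ
  rdcb : ℕ

def inc (e : ℕ) (c : Cfg) : Cfg :=
  { c with rp := c.rp + e, rupd := c.rupd + e,
           rhupd := c.rhupd + e / 2, rchk := c.rchk + e / 2 }

def dec (e : ℕ) (c : Cfg) : Cfg :=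
  { c with rn := c.rn + e, rupd := c.rupd + e,
           rhupd := c.rhupd + e / 2, rchk := c.rchk + e / 2 }

def chk (c : Cfg) : Cfg :=
  { c with rp := 0, rn := 0, rchk := min c.rchk (min c.rp c.rn) }

def cb (e : ℕ) (c : Cfg) : Cfg :=
  { c with rp := c.rp + e, rn := c.rn + e,
           rhupd := c.rhupd + e / 2, rchk := c.rchk + e / 2,
           rcb := c.rcb + e, rdcb := c.rcb + 2 * e }

def chkcb (c : Cfg) : Cfg :=
  { c with rupd := c.rdcb, rchk := min c.rchk (min c.rcb c.rdcb),
           rcb := 0, rdcb := 0 }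

/-- A configuration is dead if `rchk < rhupd`. -/
def Dead (c : Cfg) : Prop := c.rchk < c.rhupd

/-- Deadness is absorbing under all five updates. -/
theorem stmt_5 (e : ℕ) (he : Even e) (hpos : 0 < e) (c : Cfg) (hd : Dead c) :
    Dead (inc e c) ∧ Dead (dec e c) ∧ Dead (chk c) ∧ Dead (cb e c) ∧ Dead (chkcb c) := by
  simp only [Dead, inc, dec, chk, cb, chkcb]
  simp only [Dead] at hd
  refine ⟨by omega, by omega, ?_, by omega, ?_⟩ <;>
    exact lt_of_le_of_lt (min_le_left _ _) hd
end

section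
/- Ready-to-toclimb: assume the registers are ready, i.e., rp = rn = rchk = rhupd = rupd/2 = s and rcb = rdcb = 0. After applying i inc-updates and j dec-updates in any order followed by one chk-update, if i = j then the configuration is to-climb (rp = rn = 0 and rchk = rhupd = rupd/2), and if i ≠ j then the configuration is dead (rchk < rhupd). -/
/-- Apply a sequence of inc (`true`) / dec (`false`) updates, in the given order. -/
def applyOps (e : ℕ) (l : List Bool) (c : Cfg) : Cfg :=
  l.foldl (fun c b => if b then inc e c else dec e c) c

/-- Ready with value `s`: `rp = rn = rchk = rhupd = rupd / 2 = s`, `rcb = rdcb = 0`. -/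
def Ready (c : Cfg) (s : ℕ) : Prop :=
  c.rp = s ∧ c.rn = s ∧ c.rchk = s ∧ c.rhupd = s ∧ c.rupd = 2 * s ∧ c.rcb = 0 ∧ c.rdcb = 0

/-- To-climb: `rp = rn = 0` and `rchk = rhupd = rupd / 2`, `rcb = rdcb = 0`. -/
def ToClimb (c : Cfg) : Prop :=
  c.rp = 0 ∧ c.rn = 0 ∧ c.rchk = c.rhupd ∧ c.rupd = 2 * c.rhupd ∧ c.rcb = 0 ∧ c.rdcb = 0

lemma applyOps_eq (e : ℕ) (l : List Bool) (c : Cfg) :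
    applyOps e l c =
      { rp := c.rp + e * l.count true, rn := c.rn + e * l.count false,
        rupd := c.rupd + e * l.length,
        rhupd := c.rhupd + e / 2 * l.length, rchk := c.rchk + e / 2 * l.length,
        rcb := c.rcb, rdcb := c.rdcb } := by
  induction l generalizing c with
  | nil => simp [applyOps]
  | cons b t ih =>
      cases b <;>
      · simp only [applyOps, List.foldl_cons, if_true, if_false] at *
        rw [ih]
        simp [inc, dec, List.count_cons]
        and_intros <;> first | ring | trivial

/-- Ready-to-toclimb: from a ready configuration, after `i` incs and `j` decs in any
order followed by one chk, the configuration is to-climb if `i = j`, dead otherwise. -/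
theorem stmt_6 (e : ℕ) (he : Even e) (hpos : 0 < e) (s : ℕ) (c : Cfg) (hr : Ready c s)
    (i j : ℕ) (l : List Bool) (hi : l.count true = i) (hj : l.count false = j) :
    (i = j → ToClimb (chk (applyOps e l c))) ∧ (i ≠ j → Dead (chk (applyOps e l c))) := by
  obtain ⟨h1,h2,h3,h4,h5,h6,h7⟩ := hr
  obtain ⟨k, hk⟩ := he
  subst hk
  have he2 : (k+k) / 2 = k := by omega
  have hk0 : 0 < k := by omega
  have hlen : l.length = i + j := by
    subst hi hj
    induction l with
    | nil => simp
    | cons b t ih => cases b <;> simp [List.count_cons] <;> omega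
  rw [applyOps_eq]
  simp only [he2, h1, h2, h3, h4, h5, h6, h7, hi, hj, hlen, chk]
  constructor
  · rintro rfl
    have h' : k * (i + i) = (k + k) * i := by ring
    refine ⟨rfl, rfl, ?_, ?_, rfl, rfl⟩
    · show min (s + k*(i+i)) (min (s+(k+k)*i) (s+(k+k)*i)) = s + k*(i+i)
      rw [h']; simp
    · show 2*s + (k+k)*(i+i) = 2*(s + k*(i+i))
      ring
  · intro hne
    show min (s + k*(i+j)) (min (s+(k+k)*i) (s+(k+k)*j)) < s + k*(i+j)
    rcases lt_or_gt_of_ne hne with h | h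
    · calc min (s + k*(i+j)) (min (s+(k+k)*i) (s+(k+k)*j))
          ≤ s + (k+k)*i := le_trans (min_le_right _ _) (min_le_left _ _)
        _ < s + k*(i+j) := by nlinarith
    · calc min (s + k*(i+j)) (min (s+(k+k)*i) (s+(k+k)*j))
          ≤ s + (k+k)*j := le_trans (min_le_right _ _) (min_le_right _ _)
        _ < s + k*(i+j) := by nlinarith
end

section
/- Work over ℤ: let s be divisible by 4 and f ∈ ℤ even. For i ∈ ℕ define out(i) = min(s + 1, f + 1 + 4i, s/2 + 2i). Then: if f = 0, out(i) is even iff i = s/4, and out(s/4) = s; if f < 0 (f even), out(i) is odd for every i ∈ ℕ. -/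
/-- Output selection identity: with `4 ∣ s` and `f` even, `f ≤ 0`, reading `i`
letters `z` gives output `out i = min (s + 1, f + 4i + 1, s/2 + 2i)` (in ℤ).
If `f = 0`, the output is even exactly when `i = s/4`, and then it equals `s`;
if `f < 0`, the output is odd for every `i`. -/
theorem stmt_19 (s : ℕ) (hs : 4 ∣ s) (f : ℤ) (hf : Even f) (hf0 : f ≤ 0) :
    (f = 0 →
      (∀ i : ℕ, Even (min ((s : ℤ) + 1) (min (f + 4 * i + 1) ((s : ℤ) / 2 + 2 * i))) ↔
        i = s / 4) ∧
      min ((s : ℤ) + 1) (min (f + 4 * (s / 4 : ℕ) + 1) ((s : ℤ) / 2 + 2 * (s / 4 : ℕ)))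
        = s) ∧
    (f < 0 →
      ∀ i : ℕ, Odd (min ((s : ℤ) + 1) (min (f + 4 * i + 1) ((s : ℤ) / 2 + 2 * i)))) := by
  obtain ⟨k, rfl⟩ := hs
  obtain ⟨m, rfl⟩ := hf
  constructor
  · intro h0
    refine ⟨fun i => ?_, ?_⟩
    · rw [Int.even_iff]
      push_cast
      omega
    · push_cast
      omega
  · intro hneg i
    rw [Int.odd_iff]
    push_cast
    omega
end
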